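/- Let Γ be a group acting continuously on a compact Hausdorff space K, η ∈ Prob(K) not Γ-invariant, and X = ∂_η Γ the associated boundary piece. If there is no Γ-invariant probability measure on K, then there is no left-Γ-invariant state on the C*-algebra C(X)^{Γ_r} of right-Γ-invariant continuous functions on X. -/

import Mathlib

open Filter MeasureTheory Topology

/-- The set of `η`-proximal points in the Stone–Čech compactification of the
discrete group `Γ` acting (via `act`) on the compact space `K`. -/
def proximalSet {Γ : Type*} [Group Γ] [TopologicalSpace Γ] {K : Type*}
    [TopologicalSpace K] [MeasurableSpace K]
    (act : Γ → K → K) (η : MeasureTheory.Measure K) : Set (StoneCech Γ) :=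
  {ω | ∀ h : Γ, ∀ f : C(K, ℝ),
    Tendsto
      (fun g : Γ =>
        (∫ x, f x ∂(Measure.map (act (g * h)) η)) - ∫ x, f x ∂(Measure.map (act g) η))
      (Filter.comap stoneCechUnit (nhds ω)) (nhds 0)}

/-- Left translation on the Stone–Čech compactification. -/
noncomputable def leftTrans {Γ : Type*} [Group Γ] [TopologicalSpace Γ] [DiscreteTopology Γ]
    (s : Γ) : StoneCech Γ → StoneCech Γ :=
  stoneCechExtend (continuous_of_discreteTopology (f := fun g => stoneCechUnit (s * g)))

/-- Right translation on the Stone–Čech compactification. -/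
noncomputable def rightTrans {Γ : Type*} [Group Γ] [TopologicalSpace Γ] [DiscreteTopology Γ]
    (s : Γ) : StoneCech Γ → StoneCech Γ :=
  stoneCechExtend (continuous_of_discreteTopology (f := fun g => stoneCechUnit (g * s)))

/-- The right-`Γ`-invariant continuous functions on the proximal piece `X = ∂_η Γ`. -/
def rightInvariantFuns {Γ : Type*} [Group Γ] [TopologicalSpace Γ] [DiscreteTopology Γ]
    {K : Type*} [TopologicalSpace K] [MeasurableSpace K]
    (act : Γ → K → K) (η : MeasureTheory.Measure K) :
    Set C(↥(proximalSet act η), ℝ) :=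
  {f | ∀ (g : Γ) (ω : StoneCech Γ) (hω : ω ∈ proximalSet act η)
      (hω' : rightTrans g ω ∈ proximalSet act η),
    f ⟨rightTrans g ω, hω'⟩ = f ⟨ω, hω⟩}

/-!
Compose a left-invariant state `φ` on `C(X)^{Γ_r}` with the Poisson transform
`θ f ω = lim_{g → ω} ∫ f d(g • η)`. The transform is positive and unital, it lands in the
right-invariant functions because proximality of `ω` says exactly that
`∫ f d(g h • η) - ∫ f d(g • η) → 0` as `g → ω`, and it intertwines the action on `K` with left
translation on `βΓ`. Hence `φ ∘ θ` is a `Γ`-invariant state on `C(K)`, and the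
Riesz–Markov–Kakutani theorem turns it into a `Γ`-invariant regular probability measure on `K`.
-/

open scoped BoundedContinuousFunction CompactlySupported
open Set

theorem ContinuousMap.ext_stoneCechUnit {α β : Type*} [TopologicalSpace α] [TopologicalSpace β]
    [T2Space β] {F G : C(StoneCech α, β)}
    (h : ∀ a, F (stoneCechUnit a) = G (stoneCechUnit a)) : F = G :=
  ContinuousMap.coe_injective (stoneCech_hom_ext F.continuous G.continuous (funext h))

instance StoneCech.comap_nhds_neBot {α : Type*} [TopologicalSpace α] (ω : StoneCech α) :
    (comap stoneCechUnit (𝓝 ω)).NeBot :=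
  comap_neBot_iff_frequently.2 (mem_closure_iff_frequently.1 (denseRange_stoneCechUnit ω))

namespace BoundedContinuousFunction

variable {α : Type*} [TopologicalSpace α]

noncomputable def stoneCechExtend (u : α →ᵇ ℝ) : C(StoneCech α, ℝ) where
  toFun ω := (_root_.stoneCechExtend (β := Icc (-‖u‖) ‖u‖)
    (u.continuous.subtype_mk fun a => abs_le.mp (u.norm_coe_le_norm a)) ω : ℝ)
  continuous_toFun := continuous_subtype_val.comp (continuous_stoneCechExtend _)

@[simp]
theorem stoneCechExtend_stoneCechUnit (u : α →ᵇ ℝ) (a : α) :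
    u.stoneCechExtend (stoneCechUnit a) = u a := by
  simp [stoneCechExtend]

noncomputable def stoneCechExtendₗ : (α →ᵇ ℝ) →ₗ[ℝ] C(StoneCech α, ℝ) where
  toFun := stoneCechExtend
  map_add' u v := ContinuousMap.ext_stoneCechUnit fun a => by simp
  map_smul' c u := ContinuousMap.ext_stoneCechUnit fun a => by simp

@[simp]
theorem stoneCechExtend_one : (1 : α →ᵇ ℝ).stoneCechExtend = 1 :=
  ContinuousMap.ext_stoneCechUnit fun a => by simp

theorem stoneCechExtend_nonneg {u : α →ᵇ ℝ} (hu : 0 ≤ u) : 0 ≤ u.stoneCechExtend := fun ω =>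
  denseRange_stoneCechUnit.induction_on ω
    (isClosed_le continuous_const u.stoneCechExtend.continuous) fun a => by simpa using hu a

theorem tendsto_stoneCechExtend (u : α →ᵇ ℝ) (ω : StoneCech α) :
    Tendsto u (comap stoneCechUnit (𝓝 ω)) (𝓝 (u.stoneCechExtend ω)) :=
  ((u.stoneCechExtend.continuous.tendsto ω).comp (tendsto_comap (f := stoneCechUnit))).congr
    fun a => by simp

end BoundedContinuousFunction

section Translations

variable {Γ : Type*} [Group Γ] [TopologicalSpace Γ] [DiscreteTopology Γ]

@[simp]
theorem leftTrans_stoneCechUnit (s g : Γ) :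
    leftTrans s (stoneCechUnit g) = stoneCechUnit (s * g) :=
  stoneCechExtend_stoneCechUnit _ g

@[simp]
theorem rightTrans_stoneCechUnit (s g : Γ) :
    rightTrans s (stoneCechUnit g) = stoneCechUnit (g * s) :=
  stoneCechExtend_stoneCechUnit _ g

theorem continuous_leftTrans (s : Γ) : Continuous (leftTrans s : StoneCech Γ → StoneCech Γ) :=
  continuous_stoneCechExtend _

theorem continuous_rightTrans (s : Γ) : Continuous (rightTrans s : StoneCech Γ → StoneCech Γ) :=
  continuous_stoneCechExtend _

namespace BoundedContinuousFunction

theorem stoneCechExtend_leftTrans {u v : Γ →ᵇ ℝ} {s : Γ} (h : ∀ g, v g = u (s * g))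
    (ω : StoneCech Γ) : u.stoneCechExtend (leftTrans s ω) = v.stoneCechExtend ω :=
  congrFun (stoneCech_hom_ext (u.stoneCechExtend.continuous.comp (continuous_leftTrans s))
    v.stoneCechExtend.continuous (funext fun g => by simp [h])) ω

theorem stoneCechExtend_rightTrans_of_tendsto (u : Γ →ᵇ ℝ) {s : Γ} {ω : StoneCech Γ}
    (h : Tendsto (fun g => u (g * s) - u g) (comap stoneCechUnit (𝓝 ω)) (𝓝 0)) :
    u.stoneCechExtend (rightTrans s ω) = u.stoneCechExtend ω := by
  have h_right : Tendsto (fun g => u (g * s)) (comap stoneCechUnit (𝓝 ω))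
      (𝓝 (u.stoneCechExtend (rightTrans s ω))) :=
    (((u.stoneCechExtend.continuous.comp (continuous_rightTrans s)).tendsto ω).comp
      (tendsto_comap (f := stoneCechUnit))).congr fun g => by simp
  exact sub_eq_zero.1 (tendsto_nhds_unique (h_right.sub (u.tendsto_stoneCechExtend ω)) h)

end BoundedContinuousFunction

end Translations

section PoissonTransform

variable {ι K : Type*} [TopologicalSpace ι] [DiscreteTopology ι] [TopologicalSpace K]
  [CompactSpace K] [MeasurableSpace K] [OpensMeasurableSpace K]
  (ν : ι → Measure K) [∀ i, IsProbabilityMeasure (ν i)]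

theorem ContinuousMap.integrable_of_compactSpace (f : C(K, ℝ)) (μ : Measure K)
    [IsFiniteMeasure μ] : Integrable f μ :=
  f.continuous.integrable_of_hasCompactSupport (.of_compactSpace _)

noncomputable def integralFamily : C(K, ℝ) →ₗ[ℝ] (ι →ᵇ ℝ) where
  toFun f := .ofNormedAddCommGroupDiscrete (fun i => ∫ x, f x ∂(ν i)) ‖f‖ fun i => by
    simpa using norm_integral_le_of_norm_le_const (μ := ν i) (.of_forall f.norm_coe_le_norm)
  map_add' f g := by
    ext i
    exact integral_add (f.integrable_of_compactSpace _) (g.integrable_of_compactSpace _)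
  map_smul' c f := by
    ext i
    exact integral_smul c f

@[simp]
theorem integralFamily_apply (f : C(K, ℝ)) (i : ι) :
    integralFamily ν f i = ∫ x, f x ∂(ν i) := rfl

noncomputable def poissonTransform : C(K, ℝ) →ₗ[ℝ] C(StoneCech ι, ℝ) :=
  BoundedContinuousFunction.stoneCechExtendₗ ∘ₗ integralFamily ν

theorem poissonTransform_apply (f : C(K, ℝ)) :
    poissonTransform ν f = (integralFamily ν f).stoneCechExtend := rfl

theorem poissonTransform_one : poissonTransform ν 1 = 1 := by
  have : integralFamily ν 1 = 1 := by ext i; simp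
  rw [poissonTransform_apply, this, BoundedContinuousFunction.stoneCechExtend_one]

theorem poissonTransform_nonneg {f : C(K, ℝ)} (hf : 0 ≤ f) : 0 ≤ poissonTransform ν f :=
  BoundedContinuousFunction.stoneCechExtend_nonneg fun _ => integral_nonneg hf

end PoissonTransform

section GroupAction

variable {Γ K : Type*} [Group Γ] [TopologicalSpace Γ] [DiscreteTopology Γ]
  [TopologicalSpace K] [CompactSpace K] [MeasurableSpace K] [BorelSpace K]
  {act : Γ → K → K} {η : Measure K} [∀ g, IsProbabilityMeasure (η.map (act g))]

theorem poissonTransform_comp_act (hact : ∀ g, Continuous (act g))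
    (hmul : ∀ g h, act (g * h) = act g ∘ act h) (s : Γ) (f : C(K, ℝ)) (ω : StoneCech Γ) :
    poissonTransform (fun g => η.map (act g)) (f.comp ⟨act s, hact s⟩) ω =
      poissonTransform (fun g => η.map (act g)) f (leftTrans s ω) := by
  refine (BoundedContinuousFunction.stoneCechExtend_leftTrans (fun g => ?_) ω).symm
  rw [integralFamily_apply, integralFamily_apply, hmul,
    ← Measure.map_map (hact s).measurable (hact g).measurable,
    integral_map (hact s).aemeasurable f.continuous.aestronglyMeasurable]
  rfl

theorem restrict_poissonTransform_mem_rightInvariantFuns (f : C(K, ℝ)) :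
    (poissonTransform (fun g => η.map (act g)) f).restrict (proximalSet act η) ∈
      rightInvariantFuns act η := fun s _ hω _ =>
  BoundedContinuousFunction.stoneCechExtend_rightTrans_of_tendsto _ (hω s f)

end GroupAction

theorem exists_regular_probabilityMeasure_map_eq_of_invariant_functional {ι K : Type*}
    [TopologicalSpace K] [CompactSpace K] [T2Space K] [MeasurableSpace K] [BorelSpace K]
    (T : ι → K ≃ₜ K) (ψ : C(K, ℝ) →ₗ[ℝ] ℝ) (hψ_nonneg : ∀ f, 0 ≤ f → 0 ≤ ψ f)
    (hψ_one : ψ 1 = 1) (hψ_inv : ∀ i f, ψ (f.comp (T i)) = ψ f) :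
    ∃ μ : Measure K, IsProbabilityMeasure μ ∧ μ.Regular ∧ ∀ i, μ.map (T i) = μ := by
  let Λ : C_c(K, ℝ) →ₚ[ℝ] ℝ := .mk₀
    { toFun f := ψ f.toContinuousMap
      map_add' f g := map_add ψ f.toContinuousMap g.toContinuousMap
      map_smul' c f := map_smul ψ c f.toContinuousMap }
    fun f hf => hψ_nonneg f hf
  set μ := RealRMK.rieszMeasure Λ
  have hμ (f : C(K, ℝ)) : ∫ x, f x ∂μ = ψ f :=
    RealRMK.integral_rieszMeasure Λ (CompactlySupportedContinuousMap.continuousMapEquiv f)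
  refine ⟨μ, ⟨?_⟩, inferInstance, fun i => ?_⟩
  · have h := hμ 1
    simp only [ContinuousMap.one_apply, integral_const, smul_eq_mul, mul_one, hψ_one] at h
    rwa [measureReal_def, ENNReal.toReal_eq_one_iff] at h
  · have : (μ.map (T i)).Regular := .map (T i)
    refine Measure.ext_of_integral_eq_on_compactlySupported fun f => ?_
    rw [integral_map (T i).continuous.aemeasurable (map_continuous f).aestronglyMeasurable]
    exact (hμ (f.toContinuousMap.comp (T i))).trans ((hψ_inv i f).trans (hμ f).symm)

def actHomeomorph {Γ K : Type*} [Group Γ] [TopologicalSpace K] (act : Γ → K → K)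
    (hact : ∀ g, Continuous (act g)) (hone : act 1 = id)
    (hmul : ∀ g h, act (g * h) = act g ∘ act h) (g : Γ) : K ≃ₜ K where
  toFun := act g
  invFun := act g⁻¹
  left_inv x := by rw [← Function.comp_apply (f := act g⁻¹), ← hmul, inv_mul_cancel, hone, id]
  right_inv x := by rw [← Function.comp_apply (f := act g), ← hmul, mul_inv_cancel, hone, id]
  continuous_toFun := hact g
  continuous_invFun := hact g⁻¹

theorem no_left_invariant_state_on_rightInvariantFuns_general
    (Γ : Type*) [Group Γ] [TopologicalSpace Γ] [DiscreteTopology Γ]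
    (K : Type*) [TopologicalSpace K] [CompactSpace K] [T2Space K]
    [MeasurableSpace K] [BorelSpace K]
    (act : Γ → K → K) (hact : ∀ g, Continuous (act g))
    (hone : act 1 = id) (hmul : ∀ g h, act (g * h) = act g ∘ act h)
    (η : MeasureTheory.Measure K) [IsProbabilityMeasure η]
    (hnoinv : ¬ ∃ ν : MeasureTheory.Measure K,
      IsProbabilityMeasure ν ∧ ν.Regular ∧ ∀ g : Γ, Measure.map (act g) ν = ν) :
    ¬ ∃ φ : C(↥(proximalSet act η), ℝ) →ₗ[ℝ] ℝ,
        φ 1 = 1 ∧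
        (∀ f ∈ rightInvariantFuns act η, 0 ≤ f → 0 ≤ φ f) ∧
        (∀ (g : Γ), ∀ f ∈ rightInvariantFuns act η, ∀ f' ∈ rightInvariantFuns act η,
          (∀ (ω : StoneCech Γ) (hω : ω ∈ proximalSet act η)
              (hω' : leftTrans g⁻¹ ω ∈ proximalSet act η),
            f' ⟨ω, hω⟩ = f ⟨leftTrans g⁻¹ ω, hω'⟩) →
          φ f' = φ f) := by
  rintro ⟨φ, hφ_one, hφ_nonneg, hφ_inv⟩
  have (g : Γ) : IsProbabilityMeasure (η.map (act g)) :=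
    Measure.isProbabilityMeasure_map (hact g).aemeasurable
  let θ : C(K, ℝ) →ₗ[ℝ] C(proximalSet act η, ℝ) :=
    (ContinuousMap.compRightAlgHom ℝ ℝ ((ContinuousMap.id _).restrict _)).toLinearMap ∘ₗ
      poissonTransform fun g => η.map (act g)
  have hθ_mem (f : C(K, ℝ)) : θ f ∈ rightInvariantFuns act η :=
    restrict_poissonTransform_mem_rightInvariantFuns f
  refine hnoinv (exists_regular_probabilityMeasure_map_eq_of_invariant_functional
    (actHomeomorph act hact hone hmul) (φ ∘ₗ θ) (fun f hf => ?_) ?_ fun s f => ?_)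
  · exact hφ_nonneg _ (hθ_mem f) fun ω => poissonTransform_nonneg _ hf ω.1
  · simpa [θ, poissonTransform_one] using hφ_one
  · refine hφ_inv s⁻¹ _ (hθ_mem f) _ (hθ_mem _) fun ω _ _ => ?_
    simp only [inv_inv]
    exact poissonTransform_comp_act hact hmul s f ω

/-- Let the discrete group `Γ` act continuously on the compact Hausdorff space `K`, let `η` be
a regular Borel probability measure on `K` which is not `Γ`-invariant, and let `X = ∂_η Γ`.
If there is no `Γ`-invariant regular Borel probability measure on `K`, then there is no
left-`Γ`-invariant state on the algebra `C(X)^{Γ_r}` of right-`Γ`-invariant continuous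
functions on `X`. -/
theorem no_left_invariant_state_on_rightInvariantFuns
    (Γ : Type*) [Group Γ] [TopologicalSpace Γ] [DiscreteTopology Γ]
    (K : Type*) [TopologicalSpace K] [CompactSpace K] [T2Space K]
    [MeasurableSpace K] [BorelSpace K]
    (act : Γ → K → K) (hact : ∀ g, Continuous (act g))
    (hone : act 1 = id) (hmul : ∀ g h, act (g * h) = act g ∘ act h)
    (η : MeasureTheory.Measure K) [IsProbabilityMeasure η] (hreg : η.Regular)
    (hninv : ¬ ∀ g : Γ, Measure.map (act g) η = η)
    (hnoinv : ¬ ∃ ν : MeasureTheory.Measure K,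
      IsProbabilityMeasure ν ∧ ν.Regular ∧ ∀ g : Γ, Measure.map (act g) ν = ν) :
    ¬ ∃ φ : C(↥(proximalSet act η), ℝ) →ₗ[ℝ] ℝ,
        φ 1 = 1 ∧
        (∀ f ∈ rightInvariantFuns act η, 0 ≤ f → 0 ≤ φ f) ∧
        (∀ (g : Γ), ∀ f ∈ rightInvariantFuns act η, ∀ f' ∈ rightInvariantFuns act η,
          (∀ (ω : StoneCech Γ) (hω : ω ∈ proximalSet act η)
              (hω' : leftTrans g⁻¹ ω ∈ proximalSet act η),
            f' ⟨ω, hω⟩ = f ⟨leftTrans g⁻¹ ω, hω'⟩) →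
          φ f' = φ f) :=
  no_left_invariant_state_on_rightInvariantFuns_general Γ K act hact hone hmul η hnoinv
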